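/- (Data-processing-style bound for redunds) If H(Λ'|X₁) ≤ ε₁ and X₁ ⊥ X₂ | Λ exactly, then I(Λ'; X₂ | Λ) ≤ ε₁, i.e., approximately computing a redund from X₁ means it has at most ε₁ bits of conditional information about X₂ given the mediator. -/
import Mathlib


open scoped Classical BigOperators

noncomputable section

/-- Probability of an event under a mass function `p` on a finite sample space. -/
def prob {Ω : Type*} [Fintype Ω] (p : Ω → ℝ) (E : Ω → Prop) : ℝ :=
  ∑ ω, if E ω then p ω else 0

/-- Conditional Shannon entropy H(Y|X). -/
def condEnt {Ω α β : Type*} [Fintype Ω] [Fintype α] [Fintype β]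
    (p : Ω → ℝ) (X : Ω → α) (Y : Ω → β) : ℝ :=
  -∑ x, ∑ y, prob p (fun ω => X ω = x ∧ Y ω = y) *
      Real.log (prob p (fun ω => X ω = x ∧ Y ω = y) / prob p (fun ω => X ω = x))

/-- Conditional mutual information I(A;B|C) under mass function `p`. -/
def condMI {Ω α β γ : Type*} [Fintype Ω] [Fintype α] [Fintype β] [Fintype γ]
    (p : Ω → ℝ) (A : Ω → α) (B : Ω → β) (C : Ω → γ) : ℝ :=
  ∑ a, ∑ b, ∑ c,
    prob p (fun ω => A ω = a ∧ B ω = b ∧ C ω = c) *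
      Real.log
        ((prob p (fun ω => C ω = c) * prob p (fun ω => A ω = a ∧ B ω = b ∧ C ω = c)) /
          (prob p (fun ω => A ω = a ∧ C ω = c) * prob p (fun ω => B ω = b ∧ C ω = c)))

namespace RedundAux

variable {Ω : Type*} [Fintype Ω] (p : Ω → ℝ)

lemma prob_congr {E F : Ω → Prop} (h : ∀ ω, E ω ↔ F ω) : prob p E = prob p F := by
  unfold prob
  exact Finset.sum_congr rfl fun ω _ => by simp [h ω]

lemma prob_nonneg (hp : ∀ ω, 0 ≤ p ω) (E : Ω → Prop) : 0 ≤ prob p E :=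
  Finset.sum_nonneg fun ω _ => by by_cases h : E ω <;> simp [h, hp ω]

lemma prob_mono (hp : ∀ ω, 0 ≤ p ω) {E F : Ω → Prop} (h : ∀ ω, E ω → F ω) :
    prob p E ≤ prob p F := by
  apply Finset.sum_le_sum
  intro ω _
  by_cases hE : E ω
  · simp [hE, h ω hE]
  · by_cases hF : F ω <;> simp [hE, hF, hp ω]

lemma prob_decomp {α : Type*} [Fintype α] (X : Ω → α) (E : Ω → Prop) :
    prob p E = ∑ x, prob p (fun ω => E ω ∧ X ω = x) := by
  unfold prob
  rw [Finset.sum_comm]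
  refine Finset.sum_congr rfl fun ω _ => ?_
  by_cases hE : E ω <;> simp [hE]

/-- Nonnegativity of conditional entropy. -/
lemma condEnt_nonneg {α β : Type*} [Fintype α] [Fintype β]
    (hp : ∀ ω, 0 ≤ p ω) (X : Ω → α) (Y : Ω → β) : 0 ≤ condEnt p X Y := by
  unfold condEnt
  rw [neg_nonneg]
  apply Finset.sum_nonpos
  intro x _
  apply Finset.sum_nonpos
  intro y _
  set q := prob p (fun ω => X ω = x ∧ Y ω = y) with hq
  set r := prob p (fun ω => X ω = x) with hr
  have hq0 : 0 ≤ q := prob_nonneg p hp _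
  have hqr : q ≤ r := prob_mono p hp fun ω h => h.1
  rcases eq_or_lt_of_le hq0 with h0 | h0
  · simp [← h0]
  · apply mul_nonpos_of_nonneg_of_nonpos hq0
    apply Real.log_nonpos (div_nonneg hq0 (le_trans hq0 hqr))
    rw [div_le_one (lt_of_lt_of_le h0 hqr)]
    exact hqr

end RedundAux

open RedundAux

/-- Data-processing-style bound for redunds: if Λ' is computed from X₁ (possibly
with noise), i.e. Λ' ⊥ (X₂,Λ) | X₁, with H(Λ'|X₁) ≤ ε₁, and X₁ ⊥ X₂ | Λ exactly,
then I(Λ'; X₂ | Λ) ≤ ε₁. -/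
theorem redund_data_processing_bound
    {Ω α β γ δ : Type*} [Fintype Ω] [Fintype α] [Fintype β] [Fintype γ] [Fintype δ]
    (p : Ω → ℝ) (hp : ∀ ω, 0 ≤ p ω) (hsum : ∑ ω, p ω = 1)
    (X1 : Ω → α) (X2 : Ω → β) (L : Ω → γ) (L' : Ω → δ)
    (ε₁ : ℝ)
    (hent : condEnt p X1 L' ≤ ε₁)
    (hmed : ∀ x1 x2 l,
      prob p (fun ω => X1 ω = x1 ∧ X2 ω = x2 ∧ L ω = l) * prob p (fun ω => L ω = l)
        = prob p (fun ω => X1 ω = x1 ∧ L ω = l) * prob p (fun ω => X2 ω = x2 ∧ L ω = l))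
    (hnoise : ∀ v x1 x2 l,
      prob p (fun ω => L' ω = v ∧ X2 ω = x2 ∧ L ω = l ∧ X1 ω = x1)
          * prob p (fun ω => X1 ω = x1)
        = prob p (fun ω => L' ω = v ∧ X1 ω = x1)
          * prob p (fun ω => X2 ω = x2 ∧ L ω = l ∧ X1 ω = x1)) :
    condMI p L' X2 L ≤ ε₁ := by
  -- Pointwise key identity for each x1:
  have key_pt : ∀ (v : δ) (x2 : β) (l : γ) (x1 : α),
      prob p (fun ω => L ω = l) *
        prob p (fun ω => L' ω = v ∧ X2 ω = x2 ∧ L ω = l ∧ X1 ω = x1)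
      = prob p (fun ω => (L' ω = v ∧ L ω = l) ∧ X1 ω = x1) *
        prob p (fun ω => X2 ω = x2 ∧ L ω = l) := by
    intro v x2 l x1
    set B := prob p (fun ω => X1 ω = x1) with hB
    set A := prob p (fun ω => L' ω = v ∧ X2 ω = x2 ∧ L ω = l ∧ X1 ω = x1) with hA
    set C := prob p (fun ω => L' ω = v ∧ X1 ω = x1) with hC
    set G := prob p (fun ω => (L' ω = v ∧ L ω = l) ∧ X1 ω = x1) with hG
    set H := prob p (fun ω => (L ω = l ∧ X1 ω = x1)) with hH
    rcases eq_or_lt_of_le (prob_nonneg p hp (fun ω => X1 ω = x1)) with hB0 | hB0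
    · -- prob(X1 = x1) = 0 ⇒ A = 0 and G = 0
      have hA0 : A = 0 := le_antisymm
        (le_trans (prob_mono p hp fun ω h => h.2.2.2) hB0.ge) (prob_nonneg p hp _)
      have hG0 : G = 0 := le_antisymm
        (le_trans (prob_mono p hp fun ω h => h.2) hB0.ge) (prob_nonneg p hp _)
      simp [hA0, hG0]
    · -- prob(X1 = x1) > 0 : cancel B
      apply mul_right_cancel₀ (ne_of_gt hB0)
      -- G * B = C * H  (sum hnoise over x2)
      have hGB : G * B = C * H := by
        have hGdec : G = ∑ x2', prob p
            (fun ω => L' ω = v ∧ X2 ω = x2' ∧ L ω = l ∧ X1 ω = x1) := by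
          rw [hG, prob_decomp p X2 (fun ω => (L' ω = v ∧ L ω = l) ∧ X1 ω = x1)]
          exact Finset.sum_congr rfl fun x2' _ => prob_congr p (by tauto)
        have hHdec : H = ∑ x2', prob p
            (fun ω => X2 ω = x2' ∧ L ω = l ∧ X1 ω = x1) := by
          rw [hH, prob_decomp p X2 (fun ω => (L ω = l ∧ X1 ω = x1))]
          exact Finset.sum_congr rfl fun x2' _ => prob_congr p (by tauto)
        rw [hGdec, hHdec, Finset.sum_mul, Finset.mul_sum]
        exact Finset.sum_congr rfl fun x2' _ => hnoise v x1 x2' l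
      -- hmed in the right form
      have hmed' : prob p (fun ω => X2 ω = x2 ∧ L ω = l ∧ X1 ω = x1) *
          prob p (fun ω => L ω = l)
          = H * prob p (fun ω => X2 ω = x2 ∧ L ω = l) := by
        have := hmed x1 x2 l
        rw [prob_congr p (F := fun ω => X2 ω = x2 ∧ L ω = l ∧ X1 ω = x1) (by tauto : ∀ ω,
          (X1 ω = x1 ∧ X2 ω = x2 ∧ L ω = l) ↔ (X2 ω = x2 ∧ L ω = l ∧ X1 ω = x1))] at this
        rw [prob_congr p (F := fun ω => L ω = l ∧ X1 ω = x1) (by tauto : ∀ ω,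
          (X1 ω = x1 ∧ L ω = l) ↔ (L ω = l ∧ X1 ω = x1))] at this
        rw [this, hH]
      calc prob p (fun ω => L ω = l) * A * B
          = prob p (fun ω => L ω = l) * (A * B) := by ring
        _ = prob p (fun ω => L ω = l) *
            (C * prob p (fun ω => X2 ω = x2 ∧ L ω = l ∧ X1 ω = x1)) := by
              rw [hnoise v x1 x2 l]
        _ = C * (prob p (fun ω => X2 ω = x2 ∧ L ω = l ∧ X1 ω = x1) *
            prob p (fun ω => L ω = l)) := by ring
        _ = C * (H * prob p (fun ω => X2 ω = x2 ∧ L ω = l)) := by rw [hmed']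
        _ = (C * H) * prob p (fun ω => X2 ω = x2 ∧ L ω = l) := by ring
        _ = (G * B) * prob p (fun ω => X2 ω = x2 ∧ L ω = l) := by rw [hGB]
        _ = G * prob p (fun ω => X2 ω = x2 ∧ L ω = l) * B := by ring
  -- Exact conditional independence Λ' ⊥ X₂ | Λ:
  have key : ∀ (v : δ) (x2 : β) (l : γ),
      prob p (fun ω => L ω = l) * prob p (fun ω => L' ω = v ∧ X2 ω = x2 ∧ L ω = l)
      = prob p (fun ω => L' ω = v ∧ L ω = l) * prob p (fun ω => X2 ω = x2 ∧ L ω = l) := by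
    intro v x2 l
    have hdecA : prob p (fun ω => L' ω = v ∧ X2 ω = x2 ∧ L ω = l)
        = ∑ x1, prob p (fun ω => L' ω = v ∧ X2 ω = x2 ∧ L ω = l ∧ X1 ω = x1) := by
      rw [prob_decomp p X1 (fun ω => L' ω = v ∧ X2 ω = x2 ∧ L ω = l)]
      exact Finset.sum_congr rfl fun x1 _ => prob_congr p (by tauto)
    have hdecG : prob p (fun ω => L' ω = v ∧ L ω = l)
        = ∑ x1, prob p (fun ω => (L' ω = v ∧ L ω = l) ∧ X1 ω = x1) :=
      prob_decomp p X1 _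
    rw [hdecA, hdecG, Finset.mul_sum, Finset.sum_mul]
    exact Finset.sum_congr rfl fun x1 _ => key_pt v x2 l x1
  -- condMI vanishes:
  have hMI : condMI p L' X2 L = 0 := by
    unfold condMI
    apply Finset.sum_eq_zero; intro a _
    apply Finset.sum_eq_zero; intro b _
    apply Finset.sum_eq_zero; intro c _
    set q := prob p (fun ω => L' ω = a ∧ X2 ω = b ∧ L ω = c) with hq
    rcases eq_or_lt_of_le (prob_nonneg p hp
        (fun ω => L' ω = a ∧ X2 ω = b ∧ L ω = c)) with h0 | h0
    · have hq0 : q = 0 := by rw [hq, ← h0]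
      rw [hq0, zero_mul]
    · have hc : 0 < prob p (fun ω => L ω = c) :=
        lt_of_lt_of_le h0 (prob_mono p hp fun ω h => h.2.2)
      have hnum : 0 < prob p (fun ω => L ω = c) * q := mul_pos hc h0
      have := key a b c
      rw [← hq] at this
      rw [← this]
      rw [div_self (ne_of_gt hnum), Real.log_one, mul_zero]
  rw [hMI]
  exact le_trans (condEnt_nonneg p hp X1 L') hent
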